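/- arXiv:2501.08371 — 3 statements merged into one kernel-verified Lean document; each statement's English description precedes it below -/
import Mathlib

section
/- Let (Ω, μ) be a probability space, let I be a countable index set, let (E_i)_{i∈I} be a family of measurable events with ∑_{i∈I} μ(E_i) < ∞, and let D be a symmetric relation on I such that for every finite subset J ⊆ I whose elements are pairwise D-related, the events (E_i)_{i∈J} are mutually independent. Then for every integer κ ≥ 1, μ({ω ∈ Ω : there exists J ⊆ I with |J| = κ, elements of J pairwise D-related, and ω ∈ E_i for all i ∈ J}) ≤ ∑_{J ⊆ I, |J|=κ, pairwise D-related} μ(⋂_{i∈J} E_i) ≤ (∑_{i∈I} μ(E_i))^κ / κ!. -/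
open MeasureTheory
open scoped ENNReal Nat

/-! The event in question is the union, over the admissible `J`, of `⋂ i ∈ J, E i`, so the first
bound is countable subadditivity. For the second, independence turns `μ (⋂ i ∈ J, E i)` into
`∏ i ∈ J, μ (E i)`; expanding `(∑' i, μ (E i)) ^ κ` as a sum over all maps `Fin κ → I`, every
`κ`-set `J` occurs `κ!` times, once for each of its enumerations. -/

theorem ENNReal.tsum_pow_eq_tsum_prod {I : Type*} (a : I → ℝ≥0∞) (n : ℕ) :
    (∑' i, a i) ^ n = ∑' f : Fin n → I, ∏ k, a (f k) := by
  induction n with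
  | zero => simp
  | succ n ih =>
    calc (∑' i, a i) ^ (n + 1) = ∑' i, ∑' f : Fin n → I, a i * ∏ k, a (f k) := by
          simp_rw [pow_succ', ih, ENNReal.tsum_mul_left, ENNReal.tsum_mul_right]
      _ = ∑' f : Fin (n + 1) → I, ∏ k, a (f k) := by
          rw [← ENNReal.tsum_prod, ← (Fin.consEquiv fun _ => I).tsum_eq]
          simp [Fin.prod_univ_succ]

namespace Finset

variable {I : Type*} {κ : ℕ}

/-- As `σ` ranges over `Equiv.Perm (Fin κ)`, `listing J σ` runs through the `κ!` enumerations
of `J`. -/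
noncomputable def listing (J : {J : Finset I // #J = κ}) (σ : Equiv.Perm (Fin κ)) : Fin κ → I :=
  fun k => (J.1.equivFinOfCardEq J.2).symm (σ k)

theorem image_listing [DecidableEq I] (J : {J : Finset I // #J = κ})
    (σ : Equiv.Perm (Fin κ)) : univ.image (listing J σ) = J := by
  ext i
  simp only [mem_image, mem_univ, true_and, listing]
  refine ⟨fun ⟨k, hk⟩ => hk ▸ Subtype.coe_prop _, fun hi => ?_⟩
  exact ⟨σ.symm (J.1.equivFinOfCardEq J.2 ⟨i, hi⟩), by simp⟩

theorem listing_injective :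
    Function.Injective fun p : {J : Finset I // #J = κ} × Equiv.Perm (Fin κ) =>
      listing p.1 p.2 := by
  classical
  rintro ⟨J, σ⟩ ⟨J', σ'⟩ h
  obtain rfl : J = J' := Subtype.ext <| by
    rw [← image_listing J σ, ← image_listing J' σ']
    exact congrArg (univ.image ·) h
  refine Prod.ext rfl (Equiv.ext fun k => ?_)
  exact (J.1.equivFinOfCardEq J.2).symm.injective (Subtype.ext (congrFun h k))

theorem prod_listing {M : Type*} [CommMonoid M] (a : I → M) (J : {J : Finset I // #J = κ})
    (σ : Equiv.Perm (Fin κ)) : ∏ k, a (listing J σ k) = ∏ i ∈ J.1, a i :=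
  (Equiv.prod_comp (σ.trans (J.1.equivFinOfCardEq J.2).symm) fun i : J.1 => a i).trans
    (prod_coe_sort J.1 a)

end Finset

open Finset in
theorem ENNReal.factorial_mul_tsum_prod_le_tsum_pow {I : Type*} (a : I → ℝ≥0∞) (κ : ℕ) :
    κ ! * ∑' J : {J : Finset I // #J = κ}, ∏ i ∈ J.1, a i ≤ (∑' i, a i) ^ κ :=
  calc κ ! * ∑' J : {J : Finset I // #J = κ}, ∏ i ∈ J.1, a i
      = ∑' J : {J : Finset I // #J = κ}, ∑' σ : Equiv.Perm (Fin κ), ∏ k, a (listing J σ k) := by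
        simp [prod_listing, tsum_fintype, Fintype.card_perm, ENNReal.tsum_mul_left]
    _ = ∑' p : {J : Finset I // #J = κ} × Equiv.Perm (Fin κ), ∏ k, a (listing p.1 p.2 k) :=
        ENNReal.tsum_prod.symm
    _ ≤ (∑' i, a i) ^ κ := by
        rw [ENNReal.tsum_pow_eq_tsum_prod]
        exact ENNReal.tsum_comp_le_tsum_of_injective listing_injective fun f => ∏ k, a (f k)

theorem disjointness_lemma_general {Ω : Type*} [MeasurableSpace Ω] (μ : Measure Ω)
    {I : Type*} [Countable I]
    (E : I → Set Ω)
    (D : I → I → Prop)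
    (hind : ∀ J : Finset I, (∀ i ∈ J, ∀ j ∈ J, i ≠ j → D i j) →
      ∀ J' : Finset I, J' ⊆ J →
        μ (⋂ i ∈ J', E i) = ∏ i ∈ J', μ (E i)) :
    ∀ κ : ℕ, 1 ≤ κ →
      (μ {ω : Ω | ∃ J : Finset I, J.card = κ ∧
          (∀ i ∈ J, ∀ j ∈ J, i ≠ j → D i j) ∧ ∀ i ∈ J, ω ∈ E i}
        ≤ ∑' J : {J : Finset I // J.card = κ ∧ ∀ i ∈ J, ∀ j ∈ J, i ≠ j → D i j},
            μ (⋂ i ∈ (J : Finset I), E i)) ∧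
      ((∑' J : {J : Finset I // J.card = κ ∧ ∀ i ∈ J, ∀ j ∈ J, i ≠ j → D i j},
          μ (⋂ i ∈ (J : Finset I), E i))
        ≤ (∑' i, μ (E i)) ^ κ / (κ ! : ℝ≥0∞)) := by
  intro κ _
  set Admissible := {J : Finset I // J.card = κ ∧ ∀ i ∈ J, ∀ j ∈ J, i ≠ j → D i j}
  refine ⟨?_, ?_⟩
  · refine (measure_mono ?_).trans (measure_iUnion_le fun J : Admissible => ⋂ i ∈ J.1, E i)
    rintro ω ⟨J, hcard, hD, hω⟩
    exact Set.mem_iUnion.mpr ⟨⟨J, hcard, hD⟩, Set.mem_iInter₂.mpr hω⟩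
  · rw [ENNReal.le_div_iff_mul_le (Or.inl (by positivity)) (Or.inl (ENNReal.natCast_ne_top _)),
      mul_comm]
    calc (κ ! : ℝ≥0∞) * ∑' J : Admissible, μ (⋂ i ∈ J.1, E i)
        = κ ! * ∑' J : Admissible, ∏ i ∈ J.1, μ (E i) := by
          rw [tsum_congr fun J : Admissible => hind J.1 J.2.2 J.1 subset_rfl]
      _ ≤ κ ! * ∑' J : {J : Finset I // J.card = κ}, ∏ i ∈ J.1, μ (E i) := by
          gcongr
          exact ENNReal.tsum_comp_le_tsum_of_injective
            (Subtype.map_injective (fun _ hJ => hJ.1) Function.injective_id) _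
      _ ≤ (∑' i, μ (E i)) ^ κ := ENNReal.factorial_mul_tsum_prod_le_tsum_pow _ κ

/-- The disjointness lemma of Erdős--Tetali: if `(E_i)_{i∈I}` is a family of events
with `∑ μ(E_i) < ∞` and `D` is a symmetric relation such that every finite
pairwise-`D`-related subfamily is mutually independent, then for every `κ ≥ 1` the
probability that some pairwise-`D`-related `J` of size `κ` has all its events
occurring is at most `∑_{J} μ(⋂_{i∈J} E_i) ≤ (∑_i μ(E_i))^κ / κ!`. -/
theorem disjointness_lemma {Ω : Type*} [MeasurableSpace Ω] (μ : Measure Ω)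
    [IsProbabilityMeasure μ] {I : Type*} [Countable I]
    (E : I → Set Ω) (hE : ∀ i, MeasurableSet (E i))
    (hsum : ∑' i, μ (E i) ≠ ⊤)
    (D : I → I → Prop) (hD : Symmetric D)
    (hind : ∀ J : Finset I, (∀ i ∈ J, ∀ j ∈ J, i ≠ j → D i j) →
      ∀ J' : Finset I, J' ⊆ J →
        μ (⋂ i ∈ J', E i) = ∏ i ∈ J', μ (E i)) :
    ∀ κ : ℕ, 1 ≤ κ →
      (μ {ω : Ω | ∃ J : Finset I, J.card = κ ∧
          (∀ i ∈ J, ∀ j ∈ J, i ≠ j → D i j) ∧ ∀ i ∈ J, ω ∈ E i}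
        ≤ ∑' J : {J : Finset I // J.card = κ ∧ ∀ i ∈ J, ∀ j ∈ J, i ≠ j → D i j},
            μ (⋂ i ∈ (J : Finset I), E i)) ∧
      ((∑' J : {J : Finset I // J.card = κ ∧ ∀ i ∈ J, ∀ j ∈ J, i ≠ j → D i j},
          μ (⋂ i ∈ (J : Finset I), E i))
        ≤ (∑' i, μ (E i)) ^ κ / (κ ! : ℝ≥0∞)) :=
  disjointness_lemma_general μ E D hind
end

section
/- Let ω > 0 be a real number. For every integer ℓ ≥ 2 there is a constant C(ℓ,ω) such that for all integers n ≥ 1, ∑ (x_1⋯x_ℓ)^{ω−1} = (Γ(ω)^ℓ/Γ(ℓω))·n^{ℓω−1} + O_{ℓ,ω}(n^{(ℓ−1)ω−1}), where the sum is over all ℓ-tuples (x_1,…,x_ℓ) of positive integers with x_1+⋯+x_ℓ = n. -/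
/-!
Write `S_ℓ(n)` for the sum. Splitting off the first part of a composition gives
`S_{ℓ+1}(n) = ∑_{0<x<n} x^{ω-1} S_ℓ(n-x)`, so the theorem follows by induction on `ℓ` from the
two-factor estimate `∑_{0<x<n} x^{a-1} (n-x)^{b-1} = B(a,b) n^{a+b-1} + O(n^{b-1})` for
`0 < a ≤ b` (`B` the Beta function), applied with `a = ω`, `b = ℓω`, together with
`Γ(ω)^ℓ / Γ(ℓω) · B(ω, ℓω) = Γ(ω)^{ℓ+1} / Γ((ℓ+1)ω)`; the error of the induction hypothesis
only contributes `∑_{0<x<n} x^{ω-1} (n-x)^{(ℓ-1)ω-1} = O(n^{ℓω-1})`.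

The two-factor estimate is Euler–Maclaurin summation of some order `k > a` on `[1, n - 1]`. The
boundary terms are `O(n^{b-1})`; by the Leibniz rule the `k`-th derivative of
`t^{a-1} (n-t)^{b-1}` is `O(n^{b-1} (t^{a-1-k} + (n-t)^{a-1-k}))`, which integrates to
`O(n^{b-1})` because `a - 1 - k < -1`; and the Beta integral over `[0, n]` differs from the one
over `[1, n - 1]` by `O(n^{b-1})`.
-/

open Filter Finset Real Asymptotics
open scoped Topology Nat

noncomputable section

lemma rpow_le_two_rpow_abs_mul_rpow {y n : ℝ} (q : ℝ) (hn : 0 < n) (h1 : n / 2 ≤ y)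
    (h2 : y ≤ n) : y ^ q ≤ 2 ^ |q| * n ^ q := by
  rcases le_total 0 q with hq | hq
  · calc y ^ q ≤ n ^ q := rpow_le_rpow (by linarith) h2 hq
      _ ≤ 2 ^ |q| * n ^ q :=
        le_mul_of_one_le_left (by positivity) (one_le_rpow (by norm_num) (abs_nonneg q))
  · calc y ^ q ≤ (n / 2) ^ q := rpow_le_rpow_of_nonpos (by positivity) h1 hq
      _ = 2 ^ |q| * n ^ q := by
        rw [div_rpow hn.le (by norm_num), abs_of_nonpos hq, rpow_neg (by norm_num)]
        ring

lemma rpow_mul_rpow_le {u v P Q σ : ℝ} (hu : 0 < u) (hv : 0 < v) (hP : σ ≤ P) (hQ : σ ≤ Q) :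
    u ^ P * v ^ Q ≤ 2 ^ (|P| + |Q|) * (u + v) ^ (P + Q - σ) * (u ^ σ + v ^ σ) := by
  wlog huv : u ≤ v generalizing u v P Q
  · have := this hv hu hQ hP (by linarith)
    rw [add_comm u, add_comm (u ^ σ), add_comm |P|, add_comm P]
    linarith [mul_comm (u ^ P) (v ^ Q)]
  have huv0 : 0 < u + v := by linarith
  have hv' : v ^ Q ≤ 2 ^ |Q| * (u + v) ^ Q :=
    rpow_le_two_rpow_abs_mul_rpow Q huv0 (by linarith) (by linarith)
  have hu' : u ^ P ≤ u ^ σ * (u + v) ^ (P - σ) := by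
    rw [show u ^ P = u ^ σ * u ^ (P - σ) by rw [← rpow_add hu]; ring_nf]
    gcongr
    linarith
  have h2P : (1 : ℝ) ≤ 2 ^ |P| := one_le_rpow (by norm_num) (abs_nonneg P)
  calc u ^ P * v ^ Q ≤ u ^ σ * (u + v) ^ (P - σ) * (2 ^ |Q| * (u + v) ^ Q) := by gcongr
    _ = 2 ^ |Q| * (u + v) ^ (P + Q - σ) * u ^ σ := by
      rw [show P + Q - σ = (P - σ) + Q by ring, rpow_add huv0]; ring
    _ ≤ 2 ^ (|P| + |Q|) * (u + v) ^ (P + Q - σ) * (u ^ σ + v ^ σ) := by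
      rw [rpow_add (by norm_num)]
      gcongr
      · exact le_mul_of_one_le_left (by positivity) h2P
      · linarith [rpow_pos_of_pos hv σ]

lemma isBigO_rpow_rpow_of_le {p q : ℝ} (h : p ≤ q) :
    (fun x : ℝ => x ^ p) =O[atTop] fun x => x ^ q :=
  .of_bound 1 <| (eventually_ge_atTop 1).mono fun x hx => by
    rw [one_mul, norm_of_nonneg (rpow_nonneg (by linarith) _),
      norm_of_nonneg (rpow_nonneg (by linarith) _)]
    exact rpow_le_rpow_of_exponent_le hx h

lemma integral_rpow_le_of_lt_neg_one {σ X : ℝ} (hσ : σ < -1) (hX : 1 ≤ X) :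
    ∫ t in (1 : ℝ)..X, t ^ σ ≤ 1 / (-σ - 1) := by
  rw [integral_rpow (Or.inr ⟨hσ.ne, fun h => by
    rw [Set.uIcc_of_le hX] at h; linarith [h.1]⟩), one_rpow,
    show (X ^ (σ + 1) - 1) / (σ + 1) = (1 - X ^ (σ + 1)) / (-σ - 1) by
      rw [div_eq_div_iff (by linarith) (by linarith)]; ring]
  gcongr
  · linarith
  · linarith [rpow_pos_of_pos (by linarith : (0 : ℝ) < X) (σ + 1)]

lemma iteratedDeriv_rpow_const (r t : ℝ) (k : ℕ) :
    iteratedDeriv k (fun t : ℝ => t ^ r) t = (descPochhammer ℝ k).eval r * t ^ (r - k) := by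
  rw [iteratedDeriv_eq_iterate, iter_deriv_rpow_const]

open scoped ContDiff in
lemma hasDerivAt_iteratedDeriv_of_contDiffOn {f : ℝ → ℝ} {s : Set ℝ} (hs : IsOpen s)
    (hf : ContDiffOn ℝ ∞ f s) (j : ℕ) {t : ℝ} (ht : t ∈ s) :
    HasDerivAt (iteratedDeriv j f) (iteratedDeriv (j + 1) f t) t := by
  have hd : DifferentiableOn ℝ (iteratedDeriv j f) s :=
    (hf.differentiableOn_iteratedDerivWithin (by exact_mod_cast WithTop.coe_lt_top _)
      hs.uniqueDiffOn).congr fun x hx => (iteratedDerivWithin_of_isOpen hs hx).symm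
  rw [iteratedDeriv_succ]
  exact ((hd t ht).differentiableAt (hs.mem_nhds ht)).hasDerivAt

lemma sum_Ioo_eq_add_sum_range (g : ℕ → ℝ) {n : ℕ} (hn : 2 ≤ n) :
    ∑ x ∈ Ioo 0 n, g x = g 1 + ∑ i ∈ range (n - 2), g (1 + i + 1) := by
  rw [← Ico_add_one_left_eq_Ioo, sum_Ico_eq_sum_range, show n - (0 + 1) = n - 2 + 1 by omega,
    sum_range_succ']
  simp only [zero_add, add_comm]

/-! ### Euler–Maclaurin summation -/

def eulerMaclaurinKernel (k : ℕ) (s : ℝ) : ℝ := (-1) ^ (k + 1) * bernoulliFun k s / k !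

lemma hasDerivAt_eulerMaclaurinKernel (k : ℕ) (s : ℝ) :
    HasDerivAt (eulerMaclaurinKernel (k + 1)) (-eulerMaclaurinKernel k s) s := by
  refine (((hasDerivAt_bernoulliFun (k + 1) s).const_mul ((-1 : ℝ) ^ (k + 1 + 1))).div_const
    ((k + 1)! : ℝ)).congr_deriv ?_
  rw [Nat.factorial_succ, add_tsub_cancel_right, eulerMaclaurinKernel]
  push_cast
  field_simp
  ring

lemma eulerMaclaurinKernel_zero (s : ℝ) : eulerMaclaurinKernel 0 s = -1 := by
  simp [eulerMaclaurinKernel, bernoulliFun_zero]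

lemma eulerMaclaurinKernel_one (s : ℝ) : eulerMaclaurinKernel 1 s = s - 1 / 2 := by
  simp [eulerMaclaurinKernel, bernoulliFun_one]

lemma eulerMaclaurinKernel_one_eq_zero {k : ℕ} (hk : k ≠ 1) :
    eulerMaclaurinKernel k 1 = eulerMaclaurinKernel k 0 := by
  simp only [eulerMaclaurinKernel, bernoulliFun_endpoints_eq_of_ne_one hk]

lemma continuous_eulerMaclaurinKernel (k : ℕ) : Continuous (eulerMaclaurinKernel k) := by
  unfold eulerMaclaurinKernel
  fun_prop

section EulerMaclaurin

variable {F : ℕ → ℝ → ℝ} {k : ℕ} {x : ℝ}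

lemma integral_eulerMaclaurinKernel_mul {G G' : ℝ → ℝ} (k : ℕ)
    (hG : ∀ t ∈ Set.uIcc x (x + 1), HasDerivAt G (G' t) t)
    (hG' : IntervalIntegrable G' MeasureTheory.volume x (x + 1)) :
    ∫ t in x..x + 1, eulerMaclaurinKernel k (t - x) * G t =
      eulerMaclaurinKernel (k + 1) 0 * G x - eulerMaclaurinKernel (k + 1) 1 * G (x + 1) +
        ∫ t in x..x + 1, eulerMaclaurinKernel (k + 1) (t - x) * G' t := by
  have hK : ∀ t ∈ Set.uIcc x (x + 1), HasDerivAt (fun t => eulerMaclaurinKernel (k + 1) (t - x))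
      (-eulerMaclaurinKernel k (t - x)) t := fun t _ =>
    (hasDerivAt_eulerMaclaurinKernel k (t - x)).comp_sub_const t x
  have := intervalIntegral.integral_mul_deriv_eq_deriv_mul hK hG
    (((continuous_eulerMaclaurinKernel k).comp (continuous_sub_right x)).neg.intervalIntegrable
      _ _) hG'
  simp only [add_sub_cancel_left, sub_self, neg_mul, intervalIntegral.integral_neg] at this
  linarith

lemma sub_integral_eq_eulerMaclaurin (hk : 1 ≤ k)
    (hF : ∀ j ≤ k, ∀ t ∈ Set.uIcc x (x + 1), HasDerivAt (F j) (F (j + 1) t) t) :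
    F 0 (x + 1) - ∫ t in x..x + 1, F 0 t =
      ∑ j ∈ range k, -eulerMaclaurinKernel (j + 1) 0 * (F j (x + 1) - F j x) +
        ∫ t in x..x + 1, eulerMaclaurinKernel k (t - x) * F k t := by
  have hint : ∀ j < k, IntervalIntegrable (F (j + 1)) MeasureTheory.volume x (x + 1) :=
    fun j hj => ContinuousOn.intervalIntegrable fun t ht =>
      (hF (j + 1) hj t ht).continuousAt.continuousWithinAt
  induction k, hk using Nat.le_induction with
  | base =>
    have := integral_eulerMaclaurinKernel_mul 0 (hF 0 zero_le_one) (hint 0 one_pos)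
    simp only [eulerMaclaurinKernel_zero, zero_add, neg_one_mul,
      intervalIntegral.integral_neg] at this
    rw [eulerMaclaurinKernel_one, eulerMaclaurinKernel_one] at this
    rw [range_one, sum_singleton, zero_add, eulerMaclaurinKernel_one]
    linarith
  | succ k hk ih =>
    have := integral_eulerMaclaurinKernel_mul k (hF k (by omega)) (hint k (by omega))
    rw [eulerMaclaurinKernel_one_eq_zero (by omega)] at this
    rw [ih (fun j hj => hF j (by omega)) (fun j hj => hint j (by omega)), this, sum_range_succ]
    ring

lemma abs_sub_integral_sub_sum_le {C : ℝ} (hk : 1 ≤ k)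
    (hC : ∀ s ∈ Set.Icc (0 : ℝ) 1, |eulerMaclaurinKernel k s| ≤ C)
    (hF : ∀ j ≤ k, ∀ t ∈ Set.uIcc x (x + 1), HasDerivAt (F j) (F (j + 1) t) t) :
    |F 0 (x + 1) - (∫ t in x..x + 1, F 0 t) -
        ∑ j ∈ range k, -eulerMaclaurinKernel (j + 1) 0 * (F j (x + 1) - F j x)| ≤
      C * ∫ t in x..x + 1, |F k t| := by
  have h := sub_integral_eq_eulerMaclaurin hk hF
  rw [show F 0 (x + 1) - (∫ t in x..x + 1, F 0 t) -
      ∑ j ∈ range k, -eulerMaclaurinKernel (j + 1) 0 * (F j (x + 1) - F j x) =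
      ∫ t in x..x + 1, eulerMaclaurinKernel k (t - x) * F k t by linarith,
    ← intervalIntegral.integral_const_mul, ← Real.norm_eq_abs]
  refine intervalIntegral.norm_integral_le_of_norm_le (by linarith)
    (.of_forall fun t ht => ?_) ?_
  · rw [norm_mul, Real.norm_eq_abs, Real.norm_eq_abs]
    gcongr
    exact hC _ ⟨by linarith [ht.1], by linarith [ht.2]⟩
  · exact ContinuousOn.intervalIntegrable fun t ht =>
      (continuousAt_const.mul (hF k le_rfl t ht).continuousAt.abs).continuousWithinAt

lemma abs_sum_sub_integral_sub_sum_le {C : ℝ} (hk : 1 ≤ k)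
    (hC : ∀ s ∈ Set.Icc (0 : ℝ) 1, |eulerMaclaurinKernel k s| ≤ C) {A : ℝ} {m : ℕ}
    (hF : ∀ j ≤ k, ∀ t ∈ Set.Icc A (A + m), HasDerivAt (F j) (F (j + 1) t) t) :
    |∑ i ∈ range m, F 0 (A + i + 1) - (∫ t in A..A + m, F 0 t) -
        ∑ j ∈ range k, -eulerMaclaurinKernel (j + 1) 0 * (F j (A + m) - F j A)| ≤
      C * ∫ t in A..A + m, |F k t| := by
  set a : ℕ → ℝ := fun i => A + i
  have ha : ∀ i, a (i + 1) = a i + 1 := fun i => by simp only [a]; push_cast; ring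
  have hsub : ∀ i < m, Set.uIcc (a i) (a (i + 1)) ⊆ Set.Icc A (A + m) := fun i hi t ht => by
    rw [ha, Set.uIcc_of_le (by linarith)] at ht
    have : (i : ℝ) + 1 ≤ m := by exact_mod_cast hi
    exact ⟨by linarith [ht.1, (Nat.cast_nonneg i : (0 : ℝ) ≤ i)], by linarith [ht.2]⟩
  have hadj : ∀ g : ℝ → ℝ, ContinuousOn g (Set.Icc A (A + m)) →
      ∑ i ∈ range m, ∫ t in a i..a (i + 1), g t = ∫ t in A..A + m, g t := fun g hg => by
    rw [intervalIntegral.sum_integral_adjacent_intervals fun i hi =>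
      (hg.mono (hsub i hi)).intervalIntegrable]
    simp [a]
  have hcont : ∀ j ≤ k, ContinuousOn (F j) (Set.Icc A (A + m)) := fun j hj t ht =>
    (hF j hj t ht).continuousAt.continuousWithinAt
  have hunit : ∀ i ∈ range m, |F 0 (a (i + 1)) - (∫ t in a i..a (i + 1), F 0 t) -
      ∑ j ∈ range k, -eulerMaclaurinKernel (j + 1) 0 * (F j (a (i + 1)) - F j (a i))| ≤
        C * ∫ t in a i..a (i + 1), |F k t| := fun i hi => by
    rw [ha]
    exact abs_sub_integral_sub_sum_le hk hC fun j hj t ht =>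
      hF j hj t (hsub i (mem_range.1 hi) (by rwa [ha]))
  have htel : ∀ j, ∑ i ∈ range m, (F j (a (i + 1)) - F j (a i)) = F j (A + m) - F j A :=
    fun j => by rw [sum_range_sub (fun i => F j (a i))]; simp [a]
  have hdecomp : ∑ i ∈ range m, F 0 (A + i + 1) - (∫ t in A..A + m, F 0 t) -
      ∑ j ∈ range k, -eulerMaclaurinKernel (j + 1) 0 * (F j (A + m) - F j A) =
      ∑ i ∈ range m, (F 0 (a (i + 1)) - (∫ t in a i..a (i + 1), F 0 t) -
        ∑ j ∈ range k, -eulerMaclaurinKernel (j + 1) 0 * (F j (a (i + 1)) - F j (a i))) := by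
    have hbdry : ∑ i ∈ range m, ∑ j ∈ range k,
        -eulerMaclaurinKernel (j + 1) 0 * (F j (a (i + 1)) - F j (a i)) =
        ∑ j ∈ range k, -eulerMaclaurinKernel (j + 1) 0 * (F j (A + m) - F j A) := by
      rw [sum_comm]
      simp only [← mul_sum, htel]
    rw [sum_sub_distrib, sum_sub_distrib, hbdry, hadj _ (hcont 0 k.zero_le)]
    simp only [a, Nat.cast_add, Nat.cast_one, add_assoc]
  calc _ = |∑ i ∈ range m, (F 0 (a (i + 1)) - (∫ t in a i..a (i + 1), F 0 t) -
        ∑ j ∈ range k, -eulerMaclaurinKernel (j + 1) 0 * (F j (a (i + 1)) - F j (a i)))| := by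
        rw [hdecomp]
    _ ≤ ∑ i ∈ range m, C * ∫ t in a i..a (i + 1), |F k t| :=
        (abs_sum_le_sum_abs _ _).trans (sum_le_sum hunit)
    _ = C * ∫ t in A..A + m, |F k t| := by rw [← mul_sum, hadj _ (hcont k le_rfl).abs]

theorem exists_abs_sum_sub_integral_le (hk : 1 ≤ k) :
    ∃ M, ∀ (F : ℕ → ℝ → ℝ) (A : ℝ) (m : ℕ),
      (∀ j ≤ k, ∀ t ∈ Set.Icc A (A + m), HasDerivAt (F j) (F (j + 1) t) t) →
      |∑ i ∈ range m, F 0 (A + i + 1) - ∫ t in A..A + m, F 0 t| ≤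
        M * (∑ j ∈ range k, (|F j (A + m)| + |F j A|) + ∫ t in A..A + m, |F k t|) := by
  obtain ⟨C, hC⟩ := isCompact_Icc.exists_bound_of_continuousOn
    (continuous_eulerMaclaurinKernel k).continuousOn (s := Set.Icc (0 : ℝ) 1)
  have hC0 : 0 ≤ C := (abs_nonneg _).trans (hC 0 (by simp))
  set c : ℕ → ℝ := fun j => -eulerMaclaurinKernel (j + 1) 0
  refine ⟨C + ∑ j ∈ range k, |c j|, fun F A m hF => ?_⟩
  have hI : 0 ≤ ∫ t in A..A + m, |F k t| :=
    intervalIntegral.integral_nonneg (by simp) fun _ _ => abs_nonneg _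
  have hX : 0 ≤ ∑ j ∈ range k, (|F j (A + m)| + |F j A|) := by positivity
  have hS : 0 ≤ ∑ j ∈ range k, |c j| := by positivity
  have hboundary : |∑ j ∈ range k, c j * (F j (A + m) - F j A)| ≤
      (∑ j ∈ range k, |c j|) * ∑ j ∈ range k, (|F j (A + m)| + |F j A|) := by
    rw [mul_sum]
    refine (abs_sum_le_sum_abs _ _).trans (sum_le_sum fun j hj => ?_)
    rw [abs_mul]
    exact mul_le_mul (single_le_sum (f := fun j => |c j|) (fun _ _ => abs_nonneg _) hj)
      (abs_sub _ _) (abs_nonneg _) hS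
  have hrem := abs_sum_sub_integral_sub_sum_le hk hC hF
  have := abs_sub_abs_le_abs_sub (∑ i ∈ range m, F 0 (A + i + 1) - ∫ t in A..A + m, F 0 t)
    (∑ j ∈ range k, c j * (F j (A + m) - F j A))
  nlinarith

end EulerMaclaurin

/-! ### The integrand `t ^ (a - 1) * (n - t) ^ (b - 1)` -/

def betaIntegrand (a b n t : ℝ) : ℝ := t ^ (a - 1) * (n - t) ^ (b - 1)

lemma betaIntegrand_swap (a b n t : ℝ) :
    betaIntegrand a b n t = betaIntegrand b a n (n - t) := by
  simp only [betaIntegrand, sub_sub_cancel, mul_comm]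

open scoped ContDiff in
lemma contDiffOn_betaIntegrand (a b n : ℝ) :
    ContDiffOn ℝ ∞ (betaIntegrand a b n) (Set.Ioo 0 n) := fun t ht =>
  ((contDiffAt_rpow_const_of_ne ht.1.ne').mul ((contDiffAt_rpow_const_of_ne
    (sub_pos.2 ht.2).ne').comp t (contDiffAt_const.sub contDiffAt_id))).contDiffWithinAt

lemma uIcc_one_sub_one_subset_Ioo {n : ℝ} (hn : 2 ≤ n) : Set.uIcc 1 (n - 1) ⊆ Set.Ioo 0 n :=
  fun t ht => by
    rw [Set.uIcc_of_le (by linarith)] at ht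
    exact ⟨by linarith [ht.1], by linarith [ht.2]⟩

lemma iteratedDeriv_betaIntegrand (a b : ℝ) {n t : ℝ} (ht : 0 < t) (htn : t < n) (j : ℕ) :
    iteratedDeriv j (betaIntegrand a b n) t = ∑ i ∈ range (j + 1), (j.choose i : ℝ) *
      ((descPochhammer ℝ i).eval (a - 1) * t ^ (a - 1 - i)) *
      ((-1) ^ (j - i) * (descPochhammer ℝ (j - i)).eval (b - 1) *
        (n - t) ^ (b - 1 - (j - i : ℕ))) := by
  have h1 : ContDiffAt ℝ j (fun t : ℝ => t ^ (a - 1)) t := contDiffAt_rpow_const_of_ne ht.ne'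
  have h2 : ContDiffAt ℝ j (fun t : ℝ => (n - t) ^ (b - 1)) t :=
    (contDiffAt_rpow_const_of_ne (sub_pos.2 htn).ne').comp t (contDiffAt_const.sub contDiffAt_id)
  rw [show betaIntegrand a b n = (fun t : ℝ => t ^ (a - 1)) * fun t => (n - t) ^ (b - 1) from
    rfl, iteratedDeriv_mul h1 h2]
  refine sum_congr rfl fun i _ => ?_
  rw [iteratedDeriv_rpow_const, iteratedDeriv_comp_const_sub (f := fun s : ℝ => s ^ (b - 1))]
  simp only [iteratedDeriv_rpow_const, smul_eq_mul, mul_assoc]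

lemma iteratedDeriv_betaIntegrand_swap (a b n t : ℝ) (k : ℕ) :
    iteratedDeriv k (betaIntegrand a b n) t =
      (-1) ^ k * iteratedDeriv k (betaIntegrand b a n) (n - t) := by
  rw [show betaIntegrand a b n = fun t => betaIntegrand b a n (n - t) from
    funext (betaIntegrand_swap a b n), iteratedDeriv_comp_const_sub]
  rfl

lemma abs_iteratedDeriv_betaIntegrand_le (a b : ℝ) {n t : ℝ} (ht : 0 < t) (htn : t < n)
    (j : ℕ) :
    |iteratedDeriv j (betaIntegrand a b n) t| ≤ ∑ i ∈ range (j + 1), (j.choose i : ℝ) *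
      |(descPochhammer ℝ i).eval (a - 1)| * |(descPochhammer ℝ (j - i)).eval (b - 1)| *
      (t ^ (a - 1 - i) * (n - t) ^ (b - 1 - (j - i : ℕ))) := by
  rw [iteratedDeriv_betaIntegrand a b ht htn]
  refine (abs_sum_le_sum_abs _ _).trans_eq (sum_congr rfl fun i _ => ?_)
  simp only [abs_mul, abs_pow, abs_neg, abs_one, one_pow, Nat.abs_cast,
    abs_of_pos (rpow_pos_of_pos ht _), abs_of_pos (rpow_pos_of_pos (sub_pos.2 htn) _)]
  ring

lemma exists_abs_iteratedDeriv_betaIntegrand_le {a b : ℝ} (hab : a ≤ b) (k : ℕ) :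
    ∃ C, 0 ≤ C ∧ ∀ {n t : ℝ}, 0 < t → t < n → |iteratedDeriv k (betaIntegrand a b n) t| ≤
      C * n ^ (b - 1) * (t ^ (a - 1 - k) + (n - t) ^ (a - 1 - k)) := by
  refine ⟨∑ i ∈ range (k + 1), (k.choose i : ℝ) * |(descPochhammer ℝ i).eval (a - 1)| *
    |(descPochhammer ℝ (k - i)).eval (b - 1)| * 2 ^ (|a - 1 - i| + |b - 1 - (k - i : ℕ)|),
    by positivity, fun {n t} ht htn => ?_⟩
  refine (abs_iteratedDeriv_betaIntegrand_le a b ht htn k).trans ?_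
  rw [sum_mul, sum_mul]
  refine sum_le_sum fun i hi => ?_
  -- the `i`-th Leibniz term has exponents `≥ a - 1 - k` summing to `b - 1 + (a - 1 - k)`
  have hik : i ≤ k := Nat.lt_succ_iff.1 (mem_range.1 hi)
  have hcast : ((k - i : ℕ) : ℝ) = k - i := Nat.cast_sub hik
  have hik' : (i : ℝ) ≤ k := by exact_mod_cast hik
  have key := rpow_mul_rpow_le (σ := a - 1 - k) ht (sub_pos.2 htn)
    (P := a - 1 - i) (Q := b - 1 - (k - i : ℕ)) (by linarith) (by rw [hcast]; linarith)
  rw [add_sub_cancel, hcast, show a - 1 - i + (b - 1 - (k - i)) - (a - 1 - k) = b - 1 by ring]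
    at key
  rw [← hcast] at key
  calc _ ≤ (k.choose i : ℝ) * |(descPochhammer ℝ i).eval (a - 1)| *
        |(descPochhammer ℝ (k - i)).eval (b - 1)| *
          (2 ^ (|a - 1 - i| + |b - 1 - (k - i : ℕ)|) * n ^ (b - 1) *
            (t ^ (a - 1 - k) + (n - t) ^ (a - 1 - k))) := by gcongr
    _ = _ := by ring

lemma isBigO_integral_abs_iteratedDeriv_betaIntegrand {a b : ℝ} (hab : a ≤ b) {k : ℕ}
    (hk : a < k) : (fun n => ∫ t in (1 : ℝ)..n - 1, |iteratedDeriv k (betaIntegrand a b n) t|)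
      =O[atTop] fun n => n ^ (b - 1) := by
  obtain ⟨C, hC0, hC⟩ := exists_abs_iteratedDeriv_betaIntegrand_le hab k
  refine .of_bound (C * (2 / (k - a))) ?_
  filter_upwards [eventually_ge_atTop 2] with n hn
  have hn1 : (1 : ℝ) ≤ n - 1 := by linarith
  have hI := uIcc_one_sub_one_subset_Ioo hn
  rw [norm_of_nonneg (intervalIntegral.integral_nonneg hn1 fun _ _ => abs_nonneg _),
    norm_of_nonneg (rpow_nonneg (by linarith) _)]
  have hleft : ContinuousOn (fun t => t ^ (a - 1 - k)) (Set.uIcc 1 (n - 1)) :=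
    continuousOn_id.rpow_const fun t ht => Or.inl (hI ht).1.ne'
  have hright : ContinuousOn (fun t => (n - t) ^ (a - 1 - k)) (Set.uIcc 1 (n - 1)) :=
    (continuousOn_const.sub continuousOn_id).rpow_const fun t ht =>
      Or.inl (sub_pos.2 (hI ht).2).ne'
  have hσ : a - 1 - k < -1 := by linarith
  have hint : ∫ t in (1 : ℝ)..n - 1, (n - t) ^ (a - 1 - k) =
      ∫ t in (1 : ℝ)..n - 1, t ^ (a - 1 - k) := by
    rw [intervalIntegral.integral_comp_sub_left (fun t => t ^ (a - 1 - k)) n, sub_sub_cancel]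
  calc ∫ t in (1 : ℝ)..n - 1, |iteratedDeriv k (betaIntegrand a b n) t|
      ≤ ∫ t in (1 : ℝ)..n - 1, C * n ^ (b - 1) * (t ^ (a - 1 - k) + (n - t) ^ (a - 1 - k)) := by
        refine intervalIntegral.integral_mono_on hn1 ?_ ?_ fun t ht =>
          hC (by linarith [ht.1]) (by linarith [ht.2])
        · exact ContinuousOn.intervalIntegrable fun t ht =>
            (hasDerivAt_iteratedDeriv_of_contDiffOn isOpen_Ioo (contDiffOn_betaIntegrand a b n) k
              (hI ht)).continuousAt.abs.continuousWithinAt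
        · exact (continuousOn_const.mul (hleft.add hright)).intervalIntegrable
    _ = C * n ^ (b - 1) * (2 * ∫ t in (1 : ℝ)..n - 1, t ^ (a - 1 - k)) := by
        rw [intervalIntegral.integral_const_mul, intervalIntegral.integral_add, hint]
        · ring
        · exact hleft.intervalIntegrable
        · exact hright.intervalIntegrable
    _ ≤ C * n ^ (b - 1) * (2 * (1 / (k - a))) := by
        gcongr
        exact (integral_rpow_le_of_lt_neg_one hσ hn1).trans_eq (by ring_nf)
    _ = C * (2 / (k - a)) * n ^ (b - 1) := by ring

lemma isBigO_iteratedDeriv_betaIntegrand_one (a b : ℝ) (j : ℕ) :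
    (fun n => iteratedDeriv j (betaIntegrand a b n) 1) =O[atTop] fun n => n ^ (b - 1) := by
  refine .of_bound ((∑ i ∈ range (j + 1), (j.choose i : ℝ) *
    |(descPochhammer ℝ i).eval (a - 1)| * |(descPochhammer ℝ (j - i)).eval (b - 1)|) *
      2 ^ |b - 1|) ?_
  filter_upwards [eventually_ge_atTop 2] with n hn
  rw [norm_eq_abs, norm_of_nonneg (rpow_nonneg (by linarith) _)]
  refine (abs_iteratedDeriv_betaIntegrand_le a b one_pos (by linarith) j).trans ?_
  rw [sum_mul, sum_mul]
  refine sum_le_sum fun i _ => ?_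
  rw [one_rpow, one_mul, mul_assoc _ (2 ^ |b - 1|)]
  gcongr
  calc (n - 1) ^ (b - 1 - ((j - i : ℕ) : ℝ)) ≤ (n - 1) ^ (b - 1) :=
        rpow_le_rpow_of_exponent_le (by linarith) (by simp)
    _ ≤ 2 ^ |b - 1| * n ^ (b - 1) :=
        rpow_le_two_rpow_abs_mul_rpow _ (by linarith) (by linarith) (by linarith)

lemma isBigO_iteratedDeriv_betaIntegrand_sub_one {a b : ℝ} (hab : a ≤ b) (j : ℕ) :
    (fun n => iteratedDeriv j (betaIntegrand a b n) (n - 1)) =O[atTop] fun n => n ^ (b - 1) := by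
  refine (((isBigO_iteratedDeriv_betaIntegrand_one b a j).const_mul_left ((-1) ^ j)).trans
    (isBigO_rpow_rpow_of_le (by linarith))).congr_left fun n => ?_
  rw [iteratedDeriv_betaIntegrand_swap, ← mul_assoc, ← pow_add,
    Even.neg_one_pow ⟨j, rfl⟩, one_mul]

lemma integral_betaIntegrand_one {a b : ℝ} (ha : 0 < a) (hb : 0 < b) :
    ∫ t in (0 : ℝ)..1, betaIntegrand a b 1 t = ProbabilityTheory.beta a b := by
  have hβ : Complex.betaIntegral a b = ((∫ t in (0 : ℝ)..1, betaIntegrand a b 1 t : ℝ) : ℂ) := by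
    rw [Complex.betaIntegral, ← intervalIntegral.integral_ofReal]
    refine intervalIntegral.integral_congr fun t ht => ?_
    rw [Set.uIcc_of_le zero_le_one] at ht
    simp only [betaIntegrand, Complex.ofReal_mul, Complex.ofReal_cpow ht.1,
      Complex.ofReal_cpow (sub_nonneg.2 ht.2)]
    push_cast
    ring_nf
  rw [ProbabilityTheory.beta_eq_betaIntegralReal a b ha hb, hβ, Complex.ofReal_re]

lemma integral_betaIntegrand {a b : ℝ} (ha : 0 < a) (hb : 0 < b) {n : ℝ} (hn : 0 < n) :
    ∫ t in (0 : ℝ)..n, betaIntegrand a b n t =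
      ProbabilityTheory.beta a b * n ^ (a + b - 1) := by
  have hscale : ∀ s ∈ Set.uIcc (0 : ℝ) 1,
      betaIntegrand a b n (n * s) = n ^ (a + b - 2) * betaIntegrand a b 1 s := fun s hs => by
    rw [Set.uIcc_of_le zero_le_one] at hs
    rw [betaIntegrand, betaIntegrand, show n - n * s = n * (1 - s) by ring,
      mul_rpow hn.le hs.1, mul_rpow hn.le (by linarith [hs.2]),
      show a + b - 2 = (a - 1) + (b - 1) by ring, rpow_add hn]
    ring
  have := intervalIntegral.integral_comp_mul_left (a := 0) (b := 1) (betaIntegrand a b n) hn.ne'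
  rw [mul_zero, mul_one, intervalIntegral.integral_congr hscale,
    intervalIntegral.integral_const_mul, integral_betaIntegrand_one ha hb, smul_eq_mul,
    eq_inv_mul_iff_mul_eq₀ hn.ne'] at this
  rw [← this, show a + b - 1 = 1 + (a + b - 2) by ring, rpow_add hn, rpow_one]
  ring

lemma intervalIntegrable_betaIntegrand_zero_one {a : ℝ} (ha : 0 < a) (b : ℝ) {n : ℝ}
    (hn : 1 < n) : IntervalIntegrable (betaIntegrand a b n) MeasureTheory.volume 0 1 :=
  (intervalIntegral.intervalIntegrable_rpow' (by linarith)).mul_continuousOn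
    ((continuousOn_const.sub continuousOn_id).rpow_const fun t ht => Or.inl (by
      rw [Set.uIcc_of_le zero_le_one] at ht; simp only [Pi.sub_apply, id]; linarith [ht.2]))

lemma integral_betaIntegrand_zero_one_nonneg (a b : ℝ) {n : ℝ} (hn : 1 ≤ n) :
    0 ≤ ∫ t in (0 : ℝ)..1, betaIntegrand a b n t :=
  intervalIntegral.integral_nonneg zero_le_one fun t ht =>
    mul_nonneg (rpow_nonneg ht.1 _) (rpow_nonneg (by linarith [ht.2]) _)

lemma integral_betaIntegrand_zero_one_le {a : ℝ} (ha : 0 < a) (b : ℝ) {n : ℝ} (hn : 2 ≤ n) :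
    ∫ t in (0 : ℝ)..1, betaIntegrand a b n t ≤ 2 ^ |b - 1| * n ^ (b - 1) / a := by
  calc ∫ t in (0 : ℝ)..1, betaIntegrand a b n t
      ≤ ∫ t in (0 : ℝ)..1, t ^ (a - 1) * (2 ^ |b - 1| * n ^ (b - 1)) := by
        refine intervalIntegral.integral_mono_on zero_le_one
          (intervalIntegrable_betaIntegrand_zero_one ha b (by linarith))
          ((intervalIntegral.intervalIntegrable_rpow' (by linarith)).mul_const _) fun t ht => ?_
        exact mul_le_mul_of_nonneg_left (rpow_le_two_rpow_abs_mul_rpow _ (by linarith)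
          (by linarith [ht.2]) (by linarith [ht.1])) (rpow_nonneg ht.1 _)
    _ = 2 ^ |b - 1| * n ^ (b - 1) / a := by
        rw [intervalIntegral.integral_mul_const, integral_rpow (Or.inl (by linarith)),
          sub_add_cancel, one_rpow, zero_rpow ha.ne']
        ring

lemma isBigO_integral_betaIntegrand_sub {a b : ℝ} (ha : 0 < a) (hab : a ≤ b) :
    (fun n => (∫ t in (1 : ℝ)..n - 1, betaIntegrand a b n t) -
      ProbabilityTheory.beta a b * n ^ (a + b - 1)) =O[atTop] fun n => n ^ (b - 1) := by
  have hb : 0 < b := by linarith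
  refine .of_bound (2 ^ |b - 1| / a + 2 ^ |a - 1| / b) ?_
  filter_upwards [eventually_ge_atTop 2] with n hn
  rw [norm_eq_abs, norm_of_nonneg (rpow_nonneg (by linarith) _)]
  have hleft := intervalIntegrable_betaIntegrand_zero_one ha b (by linarith : (1 : ℝ) < n)
  have hright : ∫ t in n - 1..n, betaIntegrand a b n t =
      ∫ t in (0 : ℝ)..1, betaIntegrand b a n t := by
    simp only [betaIntegrand_swap a b n, intervalIntegral.integral_comp_sub_left
      (betaIntegrand b a n), sub_self, sub_sub_cancel]
  have hmid : IntervalIntegrable (betaIntegrand a b n) MeasureTheory.volume 1 (n - 1) :=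
    ((contDiffOn_betaIntegrand a b n).continuousOn.mono
      (uIcc_one_sub_one_subset_Ioo hn)).intervalIntegrable
  have hright' : IntervalIntegrable (betaIntegrand a b n) MeasureTheory.volume (n - 1) n := by
    have := ((intervalIntegrable_betaIntegrand_zero_one hb a
      (by linarith : (1 : ℝ) < n)).comp_sub_left n).symm
    simpa only [sub_zero, ← betaIntegrand_swap] using this
  have hsplit := integral_betaIntegrand ha hb (by linarith : (0 : ℝ) < n)
  rw [← intervalIntegral.integral_add_adjacent_intervals (hleft.trans hmid) hright',
    ← intervalIntegral.integral_add_adjacent_intervals hleft hmid, hright] at hsplit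
  rw [← hsplit, show ∀ x y z : ℝ, y - (x + y + z) = -(x + z) by intros; ring, abs_neg,
    abs_of_nonneg (add_nonneg (integral_betaIntegrand_zero_one_nonneg a b (by linarith))
      (integral_betaIntegrand_zero_one_nonneg b a (by linarith)))]
  have hab' : n ^ (a - 1) ≤ n ^ (b - 1) := rpow_le_rpow_of_exponent_le (by linarith) (by linarith)
  calc _ ≤ 2 ^ |b - 1| * n ^ (b - 1) / a + 2 ^ |a - 1| * n ^ (a - 1) / b :=
        add_le_add (integral_betaIntegrand_zero_one_le ha b hn)
          (integral_betaIntegrand_zero_one_le hb a hn)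
    _ ≤ 2 ^ |b - 1| * n ^ (b - 1) / a + 2 ^ |a - 1| * n ^ (b - 1) / b := by gcongr
    _ = _ := by ring

/-! ### Lattice-point sums of the Beta integrand -/

def betaSum (a b : ℝ) (n : ℕ) : ℝ := ∑ x ∈ Ioo 0 n, betaIntegrand a b n x

theorem isBigO_betaSum_sub {a b : ℝ} (ha : 0 < a) (hab : a ≤ b) :
    (fun n : ℕ => betaSum a b n - ProbabilityTheory.beta a b * (n : ℝ) ^ (a + b - 1))
      =O[atTop] fun n : ℕ => (n : ℝ) ^ (b - 1) := by
  set k := ⌊a⌋₊ + 1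
  have hk : a < k := by simpa [k] using Nat.lt_floor_add_one a
  obtain ⟨M, hM⟩ := exists_abs_sum_sub_integral_le (k := k) (by omega)
  set F : ℝ → ℕ → ℝ → ℝ := fun n j => iteratedDeriv j (betaIntegrand a b n)
  have hbound : (fun n : ℝ => ∑ j ∈ range k, (|F n j (n - 1)| + |F n j 1|) +
      ∫ t in (1 : ℝ)..n - 1, |F n k t|) =O[atTop] fun n => n ^ (b - 1) :=
    (IsBigO.fun_sum fun j _ => (isBigO_iteratedDeriv_betaIntegrand_sub_one hab j).abs_left.add
      (isBigO_iteratedDeriv_betaIntegrand_one a b j).abs_left).add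
      (isBigO_integral_abs_iteratedDeriv_betaIntegrand hab hk)
  have hEM : (fun n : ℕ => ∑ i ∈ range (n - 2), F n 0 (1 + i + 1) -
      ∫ t in (1 : ℝ)..n - 1, F n 0 t) =O[atTop] fun n : ℕ =>
        ∑ j ∈ range k, (|F n j (n - 1)| + |F n j 1|) + ∫ t in (1 : ℝ)..n - 1, |F n k t| := by
    refine .of_bound M ?_
    filter_upwards [eventually_ge_atTop 2] with n hn
    have hm : (1 : ℝ) + (n - 2 : ℕ) = n - 1 := by push_cast [Nat.cast_sub hn]; ring
    have := hM (F n) 1 (n - 2) fun j _ t ht => hasDerivAt_iteratedDeriv_of_contDiffOn isOpen_Ioo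
      (contDiffOn_betaIntegrand a b n) j ⟨by linarith [ht.1], by linarith [ht.2, hm]⟩
    rw [hm] at this
    have hn1 : (1 : ℝ) ≤ n - 1 := by rw [← hm]; simp
    rw [norm_eq_abs, norm_of_nonneg (add_nonneg (by positivity)
      (intervalIntegral.integral_nonneg hn1 fun _ _ => abs_nonneg _))]
    exact this
  have hfirst := isBigO_iteratedDeriv_betaIntegrand_one a b 0
  have hcentral := isBigO_integral_betaIntegrand_sub ha hab
  refine (((hfirst.comp_tendsto tendsto_natCast_atTop_atTop).add
    (hEM.trans (hbound.comp_tendsto tendsto_natCast_atTop_atTop))).add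
    (hcentral.comp_tendsto tendsto_natCast_atTop_atTop)).congr' ?_ EventuallyEq.rfl
  filter_upwards [eventually_ge_atTop 2] with n hn
  simp only [Function.comp_apply, F, iteratedDeriv_zero, betaSum, sum_Ioo_eq_add_sum_range _ hn]
  push_cast
  ring

lemma isBigO_betaSum {a b : ℝ} (ha : 0 < a) (hab : a ≤ b) :
    betaSum a b =O[atTop] fun n : ℕ => (n : ℝ) ^ (a + b - 1) := by
  have hpow := fun {p q : ℝ} (h : p ≤ q) =>
    (isBigO_rpow_rpow_of_le h).comp_tendsto tendsto_natCast_atTop_atTop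
  refine (((isBigO_betaSum_sub ha hab).trans (hpow (by linarith))).add
    ((isBigO_refl _ _).const_mul_left (ProbabilityTheory.beta a b))).congr_left fun n => ?_
  simp

lemma isBigO_sum_Ioo_rpow_mul {a c : ℝ} (ha : 0 < a) (hac : a ≤ c) {E : ℕ → ℝ}
    (hE : E =O[atTop] fun m : ℕ => (m : ℝ) ^ (c - 1)) :
    (fun n : ℕ => ∑ x ∈ Ioo 0 n, (x : ℝ) ^ (a - 1) * E (n - x))
      =O[atTop] fun n : ℕ => (n : ℝ) ^ (a + c - 1) := by
  obtain ⟨K, -, hK⟩ := bound_of_isBigO_nat_atTop hE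
  refine (isBigO_of_le' (g := betaSum a c) (c := K) atTop fun n => ?_).trans
    (isBigO_betaSum ha hac)
  have hnonneg : 0 ≤ betaSum a c n := sum_nonneg fun x hx => mul_nonneg
    (rpow_nonneg (Nat.cast_nonneg x) _)
    (rpow_nonneg (by rw [sub_nonneg]; exact_mod_cast (mem_Ioo.1 hx).2.le) _)
  rw [norm_of_nonneg hnonneg, betaSum, mul_sum]
  refine (norm_sum_le _ _).trans (sum_le_sum fun x hx => ?_)
  have hxn : x < n := (mem_Ioo.1 hx).2
  have hpos : (0 : ℝ) < ((n - x : ℕ) : ℝ) := by exact_mod_cast Nat.sub_pos_of_lt hxn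
  have := hK (rpow_pos_of_pos hpos (c - 1)).ne'
  rw [norm_of_nonneg (rpow_nonneg hpos.le _)] at this
  rw [norm_mul, norm_of_nonneg (rpow_nonneg (Nat.cast_nonneg x) _), betaIntegrand,
    ← Nat.cast_sub hxn.le]
  calc _ ≤ (x : ℝ) ^ (a - 1) * (K * ((n - x : ℕ) : ℝ) ^ (c - 1)) := by gcongr
    _ = _ := by ring

/-! ### Compositions -/

def compositions (ℓ n : ℕ) : Finset (Fin ℓ → ℕ) :=
  (Nat.antidiagonalTuple ℓ n).filter fun v => ∀ i, 1 ≤ v i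

lemma mem_compositions {ℓ n : ℕ} {v : Fin ℓ → ℕ} :
    v ∈ compositions ℓ n ↔ (∀ i, 1 ≤ v i) ∧ ∑ i, v i = n := by
  rw [compositions, mem_filter, Nat.mem_antidiagonalTuple, and_comm]

def compositionSum (ω : ℝ) (ℓ n : ℕ) : ℝ := ∑ v ∈ compositions ℓ n, ∏ i, (v i : ℝ) ^ (ω - 1)

lemma tsum_eq_compositionSum (ω : ℝ) (ℓ n : ℕ) :
    ∑' v : {v : Fin ℓ → ℕ // (∀ i, 1 ≤ v i) ∧ ∑ i, v i = n}, ∏ i, (v.1 i : ℝ) ^ (ω - 1) =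
      compositionSum ω ℓ n := by
  have : Fintype {v : Fin ℓ → ℕ // (∀ i, 1 ≤ v i) ∧ ∑ i, v i = n} :=
    .ofFinset (compositions ℓ n) fun v => mem_compositions
  rw [tsum_fintype, compositionSum]
  exact (sum_subtype _ (fun v => mem_compositions) (fun v => ∏ i, (v i : ℝ) ^ (ω - 1))).symm

lemma compositionSum_one (ω : ℝ) {n : ℕ} (hn : 1 ≤ n) :
    compositionSum ω 1 n = (n : ℝ) ^ (ω - 1) := by
  have : compositions 1 n = {fun _ => n} := by
    ext v
    simp only [mem_compositions, Fin.sum_univ_one, mem_singleton, Fin.forall_fin_one]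
    exact ⟨fun h => funext fun i => by rw [Subsingleton.elim i 0, h.2],
      by rintro rfl; exact ⟨hn, rfl⟩⟩
  rw [compositionSum, this, sum_singleton, Fin.prod_univ_one]

lemma compositionSum_succ (ω : ℝ) {ℓ : ℕ} (hℓ : 1 ≤ ℓ) (n : ℕ) :
    compositionSum ω (ℓ + 1) n =
      ∑ x ∈ Ioo 0 n, (x : ℝ) ^ (ω - 1) * compositionSum ω ℓ (n - x) := by
  simp only [compositionSum, mul_sum]
  rw [sum_sigma']
  refine sum_nbij' (fun v => ⟨v 0, Fin.tail v⟩) (fun p => Fin.cons p.1 p.2) (fun v hv => ?_)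
    (fun p hp => ?_) (fun v _ => Fin.cons_self_tail v) (fun p _ => by simp)
    (fun v _ => Fin.prod_univ_succ _)
  · rw [mem_compositions, Fin.sum_univ_succ] at hv
    have htail : 1 ≤ ∑ i : Fin ℓ, v i.succ :=
      (hv.1 (Fin.succ ⟨0, hℓ⟩)).trans (single_le_sum (f := fun i : Fin ℓ => v i.succ)
        (fun _ _ => Nat.zero_le _) (mem_univ _))
    simp only [mem_sigma, mem_Ioo, mem_compositions, Fin.tail]
    exact ⟨⟨hv.1 0, by omega⟩, fun i => hv.1 _, by omega⟩
  · simp only [mem_sigma, mem_Ioo, mem_compositions] at hp ⊢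
    refine ⟨Fin.cases hp.1.1 fun i => by simpa using hp.2.1 i, ?_⟩
    rw [Fin.sum_univ_succ]
    simp only [Fin.cons_zero, Fin.cons_succ]
    omega

lemma compositionSum_two (ω : ℝ) (n : ℕ) : compositionSum ω 2 n = betaSum ω ω n := by
  rw [compositionSum_succ ω le_rfl, betaSum]
  refine sum_congr rfl fun x hx => ?_
  have hxn : x < n := (mem_Ioo.1 hx).2
  rw [compositionSum_one ω (Nat.sub_pos_of_lt hxn), betaIntegrand, Nat.cast_sub hxn.le]

lemma Gamma_pow_div_mul_beta {ω : ℝ} (hω : 0 < ω) {ℓ : ℕ} (hℓ : 1 ≤ ℓ) :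
    Real.Gamma ω ^ ℓ / Real.Gamma (ℓ * ω) * ProbabilityTheory.beta ω (ℓ * ω) =
      Real.Gamma ω ^ (ℓ + 1) / Real.Gamma ((ℓ + 1 : ℕ) * ω) := by
  have : Real.Gamma (ℓ * ω) ≠ 0 :=
    (Real.Gamma_pos_of_pos (mul_pos (by exact_mod_cast hℓ) hω)).ne'
  rw [ProbabilityTheory.beta, pow_succ]
  push_cast
  field_simp
  ring_nf

theorem isBigO_compositionSum_sub {ω : ℝ} (hω : 0 < ω) {ℓ : ℕ} (hℓ : 2 ≤ ℓ) :
    (fun n : ℕ => compositionSum ω ℓ n -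
      Real.Gamma ω ^ ℓ / Real.Gamma (ℓ * ω) * (n : ℝ) ^ (ℓ * ω - 1))
      =O[atTop] fun n : ℕ => (n : ℝ) ^ ((ℓ - 1) * ω - 1) := by
  induction ℓ, hℓ using Nat.le_induction with
  | base =>
    refine (isBigO_betaSum_sub hω le_rfl).congr (fun n => ?_) fun n => ?_
    · rw [compositionSum_two, ProbabilityTheory.beta]
      push_cast
      ring_nf
    · norm_num
  | succ ℓ hℓ ih =>
    have hℓ' : (2 : ℝ) ≤ ℓ := by exact_mod_cast hℓ
    set c := Real.Gamma ω ^ ℓ / Real.Gamma (ℓ * ω) with hc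
    have hmain := (isBigO_betaSum_sub hω (by nlinarith : ω ≤ ℓ * ω)).const_mul_left c
    have herr := isBigO_sum_Ioo_rpow_mul hω (by nlinarith : ω ≤ (ℓ - 1) * ω) ih
    rw [show ω + (ℓ - 1) * ω - 1 = ℓ * ω - 1 by ring] at herr
    refine (hmain.add herr).congr (fun n => ?_) fun n => ?_
    · have hsplit : ∑ x ∈ Ioo 0 n, (x : ℝ) ^ (ω - 1) * compositionSum ω ℓ (n - x) =
          c * betaSum ω (ℓ * ω) n + ∑ x ∈ Ioo 0 n, (x : ℝ) ^ (ω - 1) *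
            (compositionSum ω ℓ (n - x) - c * ((n - x : ℕ) : ℝ) ^ (ℓ * ω - 1)) := by
        rw [betaSum, mul_sum, ← sum_add_distrib]
        refine sum_congr rfl fun x hx => ?_
        rw [betaIntegrand, Nat.cast_sub (mem_Ioo.1 hx).2.le]
        ring
      rw [compositionSum_succ ω (by omega), hsplit,
        ← Gamma_pow_div_mul_beta hω (by omega : 1 ≤ ℓ), ← hc]
      push_cast
      ring_nf
    · push_cast
      ring_nf

/-- For `ω > 0` and `ℓ ≥ 2`,
`∑_{x₁+⋯+x_ℓ = n, xᵢ ≥ 1} (x₁⋯x_ℓ)^{ω−1}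
  = (Γ(ω)^ℓ/Γ(ℓω))·n^{ℓω−1} + O_{ℓ,ω}(n^{(ℓ−1)ω−1})`. -/
theorem power_weighted_composition_sum (ω : ℝ) (hω : 0 < ω) (ℓ : ℕ) (hℓ : 2 ≤ ℓ) :
    ∃ K : ℝ, 0 < K ∧ ∀ n : ℕ, 1 ≤ n →
      |(∑' v : {v : Fin ℓ → ℕ // (∀ i, 1 ≤ v i) ∧ ∑ i, v i = n},
          ∏ i, ((v.1 i : ℝ) ^ (ω - 1)))
        - Real.Gamma ω ^ ℓ / Real.Gamma ((ℓ : ℝ) * ω) * (n : ℝ) ^ ((ℓ : ℝ) * ω - 1)|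
      ≤ K * (n : ℝ) ^ (((ℓ : ℝ) - 1) * ω - 1) := by
  obtain ⟨K, hK, hbound⟩ := bound_of_isBigO_nat_atTop (isBigO_compositionSum_sub hω hℓ)
  refine ⟨K, hK, fun n hn => ?_⟩
  have hpos : (0 : ℝ) < (n : ℝ) ^ (((ℓ : ℝ) - 1) * ω - 1) :=
    rpow_pos_of_pos (by exact_mod_cast hn) _
  have := hbound hpos.ne'
  rwa [norm_eq_abs, norm_of_nonneg hpos.le, ← tsum_eq_compositionSum] at this
end
end

section
/- Let k ≥ 1 and h ≥ h_k* be integers and ω ≥ 1/h a real number. Set h₀ := 2^{k−1} for 1 ≤ k ≤ 11 and h₀ := ⌈k²(2 log k + log log k + 2.5)⌉ − 2 for k ≥ 12, and let ξ = ξ(k) be as in the mean-value estimate ∑_{n≤x} r_{ℙ^k,m}(n)² ≪ x^{2m/k−1}(log x)^ξ valid for all m ≥ h₀. Then for every integer ℓ ≥ 2h₀, ∫_0^1 |T̃(α;x)|^ℓ dα ≪ x^{ℓω−1}(log x)^{ξ+2h₀}. -/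
open Filter MeasureTheory Finset Real
open scoped Topology Nat

/-!
Restricted to `x/h ≤ n ≤ x`, the weight `n^{ω-1/k} log n` of `T̃(α;x)` is at most
`h x^{ω-1/k} log x`. Raising `T̃` to the power `h₀` and applying Parseval therefore bounds the
`2h₀`-th moment by `(h x^{ω-1/k} log x)^{2h₀} ∑_{n ≤ h₀x} r_{ℙ^k,h₀}(n)²`, which the mean-value
hypothesis turns into `x^{2h₀ω-1} (log x)^{ξ+2h₀}`. The remaining `ℓ - 2h₀` factors are estimated
pointwise: Chebyshev's bound `θ(y) ≤ y log 4` at `y = x^{1/k}` gives `|T̃(α;x)| ≤ h k log 4 · x^ω`,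
with no loss of a logarithm.
-/

noncomputable section

/-- `e(α) = exp(2πiα)`. -/
def eAdd (α : ℝ) : ℂ := Complex.exp (2 * Real.pi * Complex.I * α)

/-- `r_{A,h}(n)`: the number of representations of `n` as an ordered sum of `h`
elements of `A`. -/
def repCount (A : Set ℕ) (h n : ℕ) : ℕ :=
  Set.ncard {v : Fin h → ℕ | (∀ i, v i ∈ A) ∧ ∑ i, v i = n}

/-- `ℙ^k`, the set of `k`-th powers of primes. -/
def PPow (k : ℕ) : Set ℕ := {m | ∃ p : ℕ, p.Prime ∧ p ^ k = m}

/-- The complete exponential sum `S(a,q) = ∑_{r=1}^q e(a r^k / q)`. -/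
def Sgauss (k a q : ℕ) : ℂ := ∑ r ∈ Finset.Icc 1 q, eAdd ((a * r ^ k : ℕ) / (q : ℝ))

/-- `𝔖*_{k,h}(n)`, the singular series of the Waring--Goldbach problem. -/
def singSeriesWG (k h n : ℕ) : ℂ :=
  ∑' q : ℕ, ∑ a ∈ (Finset.Icc 1 q).filter (fun a => Nat.gcd a q = 1),
    Sgauss k a q ^ h / (Nat.totient q : ℂ) ^ h * eAdd (-(((n * a : ℕ) : ℝ) / (q : ℝ)))

/-- The threshold `h_k^*`. -/
def hkStar (k : ℕ) : ℕ :=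
  if k ≤ 11 then 2 ^ k + 1
  else ⌈2 * (k : ℝ) ^ 2 * (2 * Real.log k + Real.log (Real.log k) + 2.5)⌉₊

/-- The Waring--Goldbach modulus `K(k) = ∏_{(p−1)∣k} p^{γ(k,p)}`. -/
def Kk (k : ℕ) : ℕ :=
  ∏ p ∈ (Finset.range (k + 2)).filter (fun p => p.Prime ∧ (p - 1) ∣ k),
    p ^ (if p = 2 ∧ 2 ∣ k then k.factorization 2 + 2 else k.factorization p + 1)

/-- `T(α;x) = ∑_{n≤x, n∈ℙ^k} n^{ω−1/k}(log n)·e(αn)`. -/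
def TP (k : ℕ) (ω : ℝ) (x : ℕ) (α : ℝ) : ℂ :=
  ∑ n ∈ Finset.range (x + 1),
    Set.indicator (PPow k)
      (fun n : ℕ => (((n : ℝ) ^ (ω - 1 / (k : ℝ)) * Real.log n : ℝ) : ℂ) * eAdd (α * n)) n

/-- `T̃(α;x) = ∑_{x/h ≤ n ≤ x, n∈ℙ^k} n^{ω−1/k}(log n)·e(αn)`. -/
def TPtil (k : ℕ) (ω : ℝ) (h x : ℕ) (α : ℝ) : ℂ :=
  ∑ n ∈ Finset.Icc ⌈(x : ℝ) / (h : ℝ)⌉₊ x,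
    Set.indicator (PPow k)
      (fun n : ℕ => (((n : ℝ) ^ (ω - 1 / (k : ℝ)) * Real.log n : ℝ) : ℂ) * eAdd (α * n)) n

/-- The threshold `h₀` of the mean-value estimate. -/
def h0 (k : ℕ) : ℕ :=
  if k ≤ 11 then 2 ^ (k - 1)
  else ⌈(k : ℝ) ^ 2 * (2 * Real.log k + Real.log (Real.log k) + 2.5)⌉₊ - 2


@[fun_prop]
lemma continuous_eAdd : Continuous eAdd := by
  unfold eAdd; fun_prop

lemma eAdd_add (a b : ℝ) : eAdd (a + b) = eAdd a * eAdd b := by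
  simp only [eAdd, Complex.ofReal_add, mul_add, Complex.exp_add]

lemma eAdd_sum {ι : Type*} (s : Finset ι) (f : ι → ℝ) :
    eAdd (∑ i ∈ s, f i) = ∏ i ∈ s, eAdd (f i) := by
  simp only [eAdd, Complex.ofReal_sum, Finset.mul_sum, Complex.exp_sum]

lemma conj_eAdd (a : ℝ) : (starRingEnd ℂ) (eAdd a) = eAdd (-a) := by
  simp only [eAdd, ← Complex.exp_conj, map_mul, Complex.conj_I, Complex.conj_ofReal, map_ofNat,
    Complex.ofReal_neg]
  ring_nf

lemma norm_eAdd (a : ℝ) : ‖eAdd a‖ = 1 := by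
  rw [eAdd, show 2 * π * Complex.I * a = ((2 * π * a : ℝ) : ℂ) * Complex.I by push_cast; ring,
    Complex.norm_exp_ofReal_mul_I]

lemma integral_eAdd_mul_intCast (n : ℤ) :
    ∫ α in (0 : ℝ)..1, eAdd (α * n) = if n = 0 then 1 else 0 := by
  split_ifs with hn
  · simp [hn, eAdd]
  have hc : 2 * π * Complex.I * n ≠ 0 := by simp [hn, Real.pi_ne_zero]
  have hexp : ∀ α : ℝ, eAdd (α * n) = Complex.exp (2 * π * Complex.I * n * α) := fun α => by
    rw [eAdd]; push_cast; ring_nf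
  have hperiod : Complex.exp (2 * π * Complex.I * n) = 1 := by
    rw [← Complex.exp_int_mul_two_pi_mul_I n]; ring_nf
  simp only [hexp, integral_exp_mul_complex hc, Complex.ofReal_one, mul_one, Complex.ofReal_zero,
    mul_zero, Complex.exp_zero, hperiod, sub_self, zero_div]

lemma integral_eAdd_mul_conj_eAdd (a b : ℕ) :
    ∫ α in (0 : ℝ)..1, eAdd (α * a) * (starRingEnd ℂ) (eAdd (α * b)) = if a = b then 1 else 0 := by
  have h : ∀ α : ℝ, eAdd (α * a) * (starRingEnd ℂ) (eAdd (α * b)) = eAdd (α * ((a - b : ℤ) : ℝ)) :=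
    fun α => by rw [conj_eAdd, ← eAdd_add]; push_cast; ring_nf
  simp only [h, integral_eAdd_mul_intCast, sub_eq_zero, Nat.cast_inj]

lemma integral_norm_sum_eAdd_sq (t : Finset ℕ) (b : ℕ → ℂ) :
    ∫ α in (0 : ℝ)..1, ‖∑ n ∈ t, b n * eAdd (α * n)‖ ^ 2 = ∑ n ∈ t, ‖b n‖ ^ 2 := by
  have hsq : ∀ z : ℂ, ((‖z‖ ^ 2 : ℝ) : ℂ) = z * (starRingEnd ℂ) z := fun z => by
    rw [Complex.mul_conj, Complex.normSq_eq_norm_sq]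
  have hexpand : ∀ α : ℝ, ((‖∑ n ∈ t, b n * eAdd (α * n)‖ ^ 2 : ℝ) : ℂ) =
      ∑ n ∈ t, ∑ n' ∈ t, b n * (starRingEnd ℂ) (b n') *
        (eAdd (α * n) * (starRingEnd ℂ) (eAdd (α * n'))) := fun α => by
    rw [hsq, map_sum, Finset.sum_mul_sum]
    refine Finset.sum_congr rfl fun n _ => Finset.sum_congr rfl fun n' _ => ?_
    rw [map_mul]; ring
  apply Complex.ofReal_injective
  rw [← intervalIntegral.integral_ofReal]
  simp only [hexpand]
  rw [intervalIntegral.integral_finsetSum fun n _ => by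
    apply Continuous.intervalIntegrable; fun_prop]
  refine (Finset.sum_congr rfl fun n _ => intervalIntegral.integral_finsetSum fun n' _ => by
    apply Continuous.intervalIntegrable; fun_prop).trans ?_
  simp only [intervalIntegral.integral_const_mul, integral_eAdd_mul_conj_eAdd, mul_ite, mul_one,
    mul_zero, Finset.sum_ite_eq, ← hsq]
  push_cast
  exact Finset.sum_congr rfl fun n hn => if_pos hn

lemma sum_eAdd_pow_eq (s : Finset ℕ) (c : ℕ → ℂ) (m X : ℕ) (hsX : ∀ n ∈ s, n ≤ X) (α : ℝ) :
    (∑ n ∈ s, c n * eAdd (α * n)) ^ m = ∑ n ∈ range (m * X + 1),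
      (∑ v ∈ Fintype.piFinset (fun _ : Fin m => s) with ∑ i, v i = n, ∏ i, c (v i)) *
        eAdd (α * n) := by
  have hterm : ∀ v : Fin m → ℕ, ∏ i, c (v i) * eAdd (α * v i) =
      (∏ i, c (v i)) * eAdd (α * ((∑ i, v i : ℕ) : ℝ)) := fun v => by
    rw [Finset.prod_mul_distrib, Nat.cast_sum, Finset.mul_sum, eAdd_sum]
  have hmaps : ∀ v ∈ Fintype.piFinset (fun _ : Fin m => s), ∑ i, v i ∈ range (m * X + 1) :=
    fun v hv => by
      rw [Fintype.mem_piFinset] at hv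
      have := Finset.sum_le_sum fun i (_ : i ∈ Finset.univ) => hsX _ (hv i)
      simp only [Finset.sum_const, Finset.card_univ, Fintype.card_fin, smul_eq_mul] at this
      exact Finset.mem_range_succ_iff.mpr this
  rw [← Fin.prod_const, Finset.prod_univ_sum]
  simp only [hterm, Finset.sum_mul]
  rw [← Finset.sum_fiberwise_of_maps_to hmaps]
  refine Finset.sum_congr rfl fun n _ => Finset.sum_congr rfl fun v hv => ?_
  rw [(Finset.mem_filter.mp hv).2]

lemma card_filter_piFinset_sum_eq_le_repCount {P : Set ℕ} {s : Finset ℕ} (hsP : ↑s ⊆ P)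
    (m n : ℕ) : #{v ∈ Fintype.piFinset (fun _ : Fin m => s) | ∑ i, v i = n} ≤ repCount P m n := by
  have hfin : {v : Fin m → ℕ | (∀ i, v i ∈ P) ∧ ∑ i, v i = n}.Finite :=
    (Set.finite_Iic fun _ => n).subset fun v hv i =>
      hv.2 ▸ Finset.single_le_sum (fun j _ => Nat.zero_le (v j)) (Finset.mem_univ i)
  rw [repCount, ← Set.ncard_coe_finset]
  refine Set.ncard_le_ncard (fun v hv => ?_) hfin
  simp only [Finset.coe_filter, Fintype.mem_piFinset, Set.mem_ofPred_eq] at hv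
  exact ⟨fun i => hsP (hv.1 i), hv.2⟩

lemma integral_norm_sum_eAdd_pow_le {P : Set ℕ} {s : Finset ℕ} (hsP : ↑s ⊆ P) (c : ℕ → ℂ)
    {W : ℝ} (hW : 0 ≤ W) (hc : ∀ n ∈ s, ‖c n‖ ≤ W) (m X : ℕ) (hsX : ∀ n ∈ s, n ≤ X) :
    ∫ α in (0 : ℝ)..1, ‖∑ n ∈ s, c n * eAdd (α * n)‖ ^ (2 * m) ≤
      W ^ (2 * m) * ∑ n ∈ range (m * X + 1), (repCount P m n : ℝ) ^ 2 := by
  have hcoef : ∀ n, ‖∑ v ∈ Fintype.piFinset (fun _ : Fin m => s) with ∑ i, v i = n,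
      ∏ i, c (v i)‖ ≤ W ^ m * repCount P m n := fun n => by
    refine (norm_sum_le _ _).trans ?_
    calc _ ≤ ∑ v ∈ Fintype.piFinset (fun _ : Fin m => s) with ∑ i, v i = n, W ^ m := by
          refine Finset.sum_le_sum fun v hv => ?_
          have hv := Fintype.mem_piFinset.mp (Finset.mem_filter.mp hv).1
          rw [norm_prod, ← Fin.prod_const]
          exact Finset.prod_le_prod (fun i _ => norm_nonneg _) fun i _ => hc _ (hv i)
      _ ≤ W ^ m * repCount P m n := by
          rw [Finset.sum_const, nsmul_eq_mul, mul_comm]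
          gcongr
          exact_mod_cast card_filter_piFinset_sum_eq_le_repCount hsP m n
  calc ∫ α in (0 : ℝ)..1, ‖∑ n ∈ s, c n * eAdd (α * n)‖ ^ (2 * m)
      = ∫ α in (0 : ℝ)..1, ‖(∑ n ∈ s, c n * eAdd (α * n)) ^ m‖ ^ 2 := by
        simp only [norm_pow, ← pow_mul, mul_comm m 2]
    _ = ∑ n ∈ range (m * X + 1),
          ‖∑ v ∈ Fintype.piFinset (fun _ : Fin m => s) with ∑ i, v i = n, ∏ i, c (v i)‖ ^ 2 := by
        simp only [sum_eAdd_pow_eq s c m X hsX, integral_norm_sum_eAdd_sq]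
    _ ≤ ∑ n ∈ range (m * X + 1), (W ^ m * repCount P m n) ^ 2 :=
        Finset.sum_le_sum fun n _ => pow_le_pow_left₀ (norm_nonneg _) (hcoef n) 2
    _ = W ^ (2 * m) * ∑ n ∈ range (m * X + 1), (repCount P m n : ℝ) ^ 2 := by
        rw [Finset.mul_sum]
        refine Finset.sum_congr rfl fun n _ => by ring

lemma rpow_le_mul_rpow_of_div_le {h x y e : ℝ} (hh : 1 ≤ h) (he : -1 ≤ e) (hy : 0 < y)
    (hxy : x / h ≤ y) (hyx : y ≤ x) : y ^ e ≤ h * x ^ e := by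
  have hx : 0 < x := hy.trans_le hyx
  rcases le_or_gt 0 e with he0 | he0
  · exact (rpow_le_rpow hy.le hyx he0).trans (le_mul_of_one_le_left (by positivity) hh)
  calc y ^ e ≤ (x / h) ^ e := rpow_le_rpow_of_nonpos (by positivity) hxy he0.le
    _ = h ^ (-e) * x ^ e := by
        rw [div_rpow hx.le (by linarith), rpow_neg (by linarith), div_eq_inv_mul]
    _ ≤ h ^ (1 : ℝ) * x ^ e := by gcongr; linarith
    _ = h * x ^ e := by rw [rpow_one]

lemma pos_of_mem_PPow {k n : ℕ} (hn : n ∈ PPow k) : 0 < n := by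
  obtain ⟨p, hp, rfl⟩ := hn
  exact pow_pos hp.pos k

def ppowWeight (k : ℕ) (ω : ℝ) (n : ℕ) : ℝ := (n : ℝ) ^ (ω - 1 / (k : ℝ)) * log n

lemma ppowWeight_nonneg (k : ℕ) (ω : ℝ) (n : ℕ) : 0 ≤ ppowWeight k ω n :=
  mul_nonneg (rpow_nonneg n.cast_nonneg _) (log_natCast_nonneg n)

def TPtilSupport (k h x : ℕ) : Finset ℕ :=
  open scoped Classical in {n ∈ Icc ⌈(x : ℝ) / h⌉₊ x | n ∈ PPow k}

lemma mem_TPtilSupport {k h x n : ℕ} :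
    n ∈ TPtilSupport k h x ↔ (⌈(x : ℝ) / h⌉₊ ≤ n ∧ n ≤ x) ∧ n ∈ PPow k := by
  classical
  rw [TPtilSupport, Finset.mem_filter, Finset.mem_Icc]

lemma TPtilSupport_subset_PPow (k h x : ℕ) : ↑(TPtilSupport k h x) ⊆ PPow k :=
  fun _ hn => (mem_TPtilSupport.mp hn).2

lemma le_of_mem_TPtilSupport {k h x n : ℕ} (hn : n ∈ TPtilSupport k h x) : n ≤ x :=
  (mem_TPtilSupport.mp hn).1.2

lemma TPtil_eq_sum (k : ℕ) (ω : ℝ) (h x : ℕ) (α : ℝ) :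
    TPtil k ω h x α = ∑ n ∈ TPtilSupport k h x, (ppowWeight k ω n : ℂ) * eAdd (α * n) := by
  classical
  rw [TPtil, TPtilSupport, Finset.sum_filter]
  refine Finset.sum_congr rfl fun n _ => ?_
  simp only [Set.indicator_apply, ppowWeight]

lemma ppowWeight_le {k h x n : ℕ} {ω : ℝ} (hk : 1 ≤ k) (hh : 1 ≤ h) (hω : 0 ≤ ω)
    (hn : n ∈ TPtilSupport k h x) :
    ppowWeight k ω n ≤ h * (x : ℝ) ^ (ω - 1 / (k : ℝ)) * log n := by
  have hk' : 1 / (k : ℝ) ≤ 1 := div_le_one_of_le₀ (by exact_mod_cast hk) (by positivity)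
  have hn0 : (0 : ℝ) < n := by exact_mod_cast pos_of_mem_PPow (TPtilSupport_subset_PPow k h x hn)
  have hnx : (n : ℝ) ≤ x := by exact_mod_cast le_of_mem_TPtilSupport hn
  have hxn : (x : ℝ) / h ≤ n := Nat.ceil_le.mp (mem_TPtilSupport.mp hn).1.1
  refine mul_le_mul_of_nonneg_right ?_ (log_natCast_nonneg n)
  exact rpow_le_mul_rpow_of_div_le (by exact_mod_cast hh) (by linarith) hn0 hxn hnx

lemma ppowWeight_le_log {k h x n : ℕ} {ω : ℝ} (hk : 1 ≤ k) (hh : 1 ≤ h) (hω : 0 ≤ ω)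
    (hn : n ∈ TPtilSupport k h x) :
    ppowWeight k ω n ≤ h * (x : ℝ) ^ (ω - 1 / (k : ℝ)) * log x := by
  refine (ppowWeight_le hk hh hω hn).trans ?_
  have hn0 : (0 : ℝ) < n := by exact_mod_cast pos_of_mem_PPow (TPtilSupport_subset_PPow k h x hn)
  gcongr
  exact_mod_cast le_of_mem_TPtilSupport hn

lemma sum_log_le_mul_theta {k x : ℕ} (hk : 1 ≤ k) {s : Finset ℕ} (hsP : ↑s ⊆ PPow k)
    (hsx : ∀ n ∈ s, n ≤ x) : ∑ n ∈ s, log n ≤ k * Chebyshev.theta ((x : ℝ) ^ (1 / (k : ℝ))) := by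
  have hk0 : (0 : ℝ) < k := by exact_mod_cast hk
  set primes := (Ioc 0 ⌊(x : ℝ) ^ (1 / (k : ℝ))⌋₊).filter Nat.Prime
  have hsub : s ⊆ primes.image (fun p : ℕ => p ^ k) := fun n hn => by
    obtain ⟨p, hp, rfl⟩ := hsP hn
    have hpx : (p : ℝ) ≤ (x : ℝ) ^ (1 / (k : ℝ)) := by
      rw [one_div, le_rpow_inv_iff_of_pos p.cast_nonneg x.cast_nonneg hk0, rpow_natCast]
      exact_mod_cast hsx _ hn
    exact Finset.mem_image.mpr
      ⟨p, Finset.mem_filter.mpr ⟨Finset.mem_Ioc.mpr ⟨hp.pos, Nat.le_floor hpx⟩, hp⟩, rfl⟩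
  calc ∑ n ∈ s, log n ≤ ∑ n ∈ primes.image (fun p : ℕ => p ^ k), log (n : ℝ) :=
        Finset.sum_le_sum_of_subset_of_nonneg hsub fun n _ _ => log_natCast_nonneg n
    _ = ∑ p ∈ primes, k * log p := by
        rw [Finset.sum_image fun p _ q _ hpq => Nat.pow_left_injective (by omega) hpq]
        simp only [Nat.cast_pow, Real.log_pow]
    _ = k * Chebyshev.theta ((x : ℝ) ^ (1 / (k : ℝ))) := by rw [← Finset.mul_sum]; rfl

lemma norm_TPtil_le {k h x : ℕ} {ω : ℝ} (hk : 1 ≤ k) (hh : 1 ≤ h) (hω : 0 ≤ ω) (hx : 0 < x)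
    (α : ℝ) : ‖TPtil k ω h x α‖ ≤ h * k * log 4 * (x : ℝ) ^ ω := by
  calc ‖TPtil k ω h x α‖ ≤ ∑ n ∈ TPtilSupport k h x, ppowWeight k ω n := by
        rw [TPtil_eq_sum]
        refine (norm_sum_le _ _).trans_eq (Finset.sum_congr rfl fun n _ => ?_)
        rw [norm_mul, norm_eAdd, mul_one, Complex.norm_real,
          norm_of_nonneg (ppowWeight_nonneg k ω n)]
    _ ≤ ∑ n ∈ TPtilSupport k h x, h * (x : ℝ) ^ (ω - 1 / (k : ℝ)) * log n :=
        Finset.sum_le_sum fun n hn => ppowWeight_le hk hh hω hn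
    _ ≤ h * (x : ℝ) ^ (ω - 1 / (k : ℝ)) * (k * (log 4 * (x : ℝ) ^ (1 / (k : ℝ)))) := by
        rw [← Finset.mul_sum]
        gcongr
        exact (sum_log_le_mul_theta hk (TPtilSupport_subset_PPow k h x)
          fun n => le_of_mem_TPtilSupport).trans
          (by gcongr; exact Chebyshev.theta_le_log4_mul_x (by positivity))
    _ = h * k * log 4 * (x : ℝ) ^ ω := by
        have hxω : (x : ℝ) ^ (ω - 1 / (k : ℝ)) * (x : ℝ) ^ (1 / (k : ℝ)) = (x : ℝ) ^ ω := by
          rw [← rpow_add (by exact_mod_cast hx), sub_add_cancel]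
        rw [← hxω]; ring

lemma continuous_TPtil (k : ℕ) (ω : ℝ) (h x : ℕ) : Continuous (TPtil k ω h x) := by
  simp only [funext (TPtil_eq_sum k ω h x)]
  fun_prop

lemma integral_norm_TPtil_pow_le {k h x : ℕ} {ω : ℝ} (hk : 1 ≤ k) (hh : 1 ≤ h) (hω : 0 ≤ ω)
    (m : ℕ) : ∫ α in (0 : ℝ)..1, ‖TPtil k ω h x α‖ ^ (2 * m) ≤
      (h * (x : ℝ) ^ (ω - 1 / (k : ℝ)) * log x) ^ (2 * m) *
        ∑ n ∈ range (m * x + 1), (repCount (PPow k) m n : ℝ) ^ 2 := by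
  simp only [TPtil_eq_sum]
  refine integral_norm_sum_eAdd_pow_le (TPtilSupport_subset_PPow k h x) _
    (mul_nonneg (by positivity) (log_natCast_nonneg x)) (fun n hn => ?_) m x
    fun n => le_of_mem_TPtilSupport
  rw [Complex.norm_real, norm_of_nonneg (ppowWeight_nonneg k ω n)]
  exact ppowWeight_le_log hk hh hω hn

lemma rpow_le_rpow_abs_mul_rpow {a b A : ℝ} (ha : 0 < a) (hab : a ≤ b) (hbA : b ≤ A * a)
    (ξ : ℝ) : b ^ ξ ≤ A ^ |ξ| * a ^ ξ := by
  have hA : 1 ≤ A := le_of_mul_le_mul_right (by linarith) ha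
  rcases le_or_gt 0 ξ with hξ | hξ
  · rw [abs_of_nonneg hξ, ← mul_rpow (by linarith) ha.le]
    exact rpow_le_rpow (by linarith) hbA hξ
  · exact (rpow_le_rpow_of_nonpos ha hab hξ.le).trans
      (le_mul_of_one_le_left (by positivity) (one_le_rpow hA (abs_nonneg ξ)))

lemma log_mul_le_one_add_log_div_log_two_mul {m x : ℝ} (hm : 1 ≤ m) (hx : 2 ≤ x) :
    log (m * x) ≤ (1 + log m / log 2) * log x := by
  have hlog2 : 0 < log 2 := log_pos one_lt_two
  have hlogm : 0 ≤ log m / log 2 := div_nonneg (log_nonneg hm) hlog2.le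
  rw [log_mul (by positivity) (by positivity), add_mul, one_mul, add_comm]
  gcongr
  calc log m = log m / log 2 * log 2 := by field_simp
    _ ≤ log m / log 2 * log x := by gcongr

lemma integral_norm_TPtil_pow_two_mul_le {k h m : ℕ} {ω ξ K₀ : ℝ} (hk : 1 ≤ k) (hh : 1 ≤ h)
    (hω : 0 ≤ ω) (hm : 1 ≤ m) (hK₀ : 0 < K₀)
    (hmean : ∀ y : ℝ, 2 ≤ y → ∑ n ∈ range (⌊y⌋₊ + 1), (repCount (PPow k) m n : ℝ) ^ 2
        ≤ K₀ * y ^ (2 * (m : ℝ) / (k : ℝ) - 1) * log y ^ ξ) :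
    ∃ K : ℝ, 0 < K ∧ ∀ x : ℕ, 2 ≤ x → ∫ α in (0 : ℝ)..1, ‖TPtil k ω h x α‖ ^ (2 * m) ≤
      K * (x : ℝ) ^ (2 * (m : ℝ) * ω - 1) * log x ^ (ξ + 2 * (m : ℝ)) := by
  set q := 2 * (m : ℝ) / (k : ℝ) - 1
  set A := 1 + log m / log 2
  have hm0 : (0 : ℝ) < m := by exact_mod_cast hm
  refine ⟨h ^ (2 * m) * m ^ q * K₀ * A ^ |ξ|, by positivity, fun x hx => ?_⟩
  have hx2 : (2 : ℝ) ≤ x := by exact_mod_cast hx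
  have hx0 : (0 : ℝ) < x := by positivity
  have hlogx : 0 < log x := log_pos (by linarith)
  have hmx : ∑ n ∈ range (m * x + 1), (repCount (PPow k) m n : ℝ) ^ 2 ≤
      K₀ * (m * x : ℝ) ^ q * (A ^ |ξ| * log x ^ ξ) := by
    have := hmean (m * x : ℕ) (by norm_cast; nlinarith)
    rw [Nat.floor_natCast, Nat.cast_mul] at this
    refine this.trans (mul_le_mul_of_nonneg_left ?_ (by positivity))
    exact rpow_le_rpow_abs_mul_rpow hlogx
      (log_le_log hx0 (le_mul_of_one_le_left hx0.le (by exact_mod_cast hm)))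
      (log_mul_le_one_add_log_div_log_two_mul (by exact_mod_cast hm) hx2) ξ
  have hxpow : ((x : ℝ) ^ (ω - 1 / (k : ℝ))) ^ (2 * m) * (x : ℝ) ^ q =
      (x : ℝ) ^ (2 * (m : ℝ) * ω - 1) := by
    rw [← rpow_natCast, ← rpow_mul hx0.le, ← rpow_add hx0]
    congr 1
    push_cast
    ring
  have hlogpow : log x ^ (2 * m) * log x ^ ξ = log x ^ (ξ + 2 * (m : ℝ)) := by
    rw [← rpow_natCast, ← rpow_add hlogx]
    push_cast
    ring_nf
  calc ∫ α in (0 : ℝ)..1, ‖TPtil k ω h x α‖ ^ (2 * m)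
      ≤ (h * (x : ℝ) ^ (ω - 1 / (k : ℝ)) * log x) ^ (2 * m) *
          (K₀ * (m * x : ℝ) ^ q * (A ^ |ξ| * log x ^ ξ)) :=
        (integral_norm_TPtil_pow_le hk hh hω m).trans (by gcongr)
    _ = h ^ (2 * m) * m ^ q * K₀ * A ^ |ξ| * (x : ℝ) ^ (2 * (m : ℝ) * ω - 1) *
          log x ^ (ξ + 2 * (m : ℝ)) := by
        rw [← hxpow, ← hlogpow, mul_rpow hm0.le hx0.le]
        ring

lemma integral_norm_pow_le_pow_mul_integral_norm_pow {E : Type*} [NormedAddCommGroup E] {f : ℝ → E}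
    (hf : Continuous f) {M : ℝ} (hM : ∀ t, ‖f t‖ ≤ M) {j ℓ : ℕ} (hjℓ : j ≤ ℓ) {a b : ℝ}
    (hab : a ≤ b) : ∫ t in a..b, ‖f t‖ ^ ℓ ≤ M ^ (ℓ - j) * ∫ t in a..b, ‖f t‖ ^ j := by
  rw [← intervalIntegral.integral_const_mul]
  refine intervalIntegral.integral_mono_on hab ((by fun_prop : Continuous _).intervalIntegrable _ _)
    ((by fun_prop : Continuous _).intervalIntegrable _ _) fun t _ => ?_
  rw [← Nat.sub_add_cancel hjℓ, pow_add, Nat.add_sub_cancel]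
  gcongr
  exact hM t

lemma three_le_sq_mul_two_log_add_log_log {k : ℕ} (hk : 12 ≤ k) :
    3 ≤ (k : ℝ) ^ 2 * (2 * log k + log (log k) + 2.5) := by
  have hk' : (12 : ℝ) ≤ k := by exact_mod_cast hk
  have hlogk : 1 ≤ log k := by
    rw [le_log_iff_exp_le (by linarith)]
    linarith [exp_one_lt_three]
  have hloglogk : 0 ≤ log (log k) := log_nonneg hlogk
  nlinarith

lemma one_le_hkStar (k : ℕ) : 1 ≤ hkStar k := by
  unfold hkStar
  split_ifs with hk
  · exact Nat.le_add_left 1 _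
  · refine Nat.one_le_ceil_iff.mpr ?_
    linarith [three_le_sq_mul_two_log_add_log_log (k := k) (by omega)]

lemma one_le_h0 (k : ℕ) : 1 ≤ h0 k := by
  unfold h0
  split_ifs with hk
  · exact Nat.one_le_two_pow
  · have hceil : 3 ≤ ⌈(k : ℝ) ^ 2 * (2 * log k + log (log k) + 2.5)⌉₊ := by
      exact_mod_cast (three_le_sq_mul_two_log_add_log_log (by omega)).trans (Nat.le_ceil _)
    omega

/-- Moment bound for `T̃`: if `ξ` is such that the mean-value estimate
`∑_{n≤x} r_{ℙ^k,m}(n)² ≪ x^{2m/k−1}(log x)^ξ` holds for all `m ≥ h₀`, then for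
every `ℓ ≥ 2h₀`, `∫₀¹ |T̃(α;x)|^ℓ dα ≪ x^{ℓω−1}(log x)^{ξ+2h₀}`. -/
theorem moment_bound_Ttilde (k h : ℕ) (hk : 1 ≤ k) (hh : hkStar k ≤ h)
    (ω : ℝ) (hω : 1 / (h : ℝ) ≤ ω) (ξ : ℝ)
    (hmean : ∀ m : ℕ, h0 k ≤ m → ∃ K : ℝ, 0 < K ∧ ∀ x : ℝ, 2 ≤ x →
      ∑ n ∈ Finset.range (⌊x⌋₊ + 1), (repCount (PPow k) m n : ℝ) ^ 2
        ≤ K * x ^ (2 * (m : ℝ) / (k : ℝ) - 1) * Real.log x ^ ξ) :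
    ∀ ℓ : ℕ, 2 * h0 k ≤ ℓ → ∃ K : ℝ, 0 < K ∧ ∀ x : ℕ, 2 ≤ x →
      (∫ α in (0:ℝ)..1, ‖TPtil k ω h x α‖ ^ ℓ)
        ≤ K * (x : ℝ) ^ ((ℓ : ℝ) * ω - 1) * Real.log x ^ (ξ + 2 * (h0 k : ℝ)) := by
  intro ℓ hℓ
  have hh1 : 1 ≤ h := (one_le_hkStar k).trans hh
  have hω0 : 0 ≤ ω := le_trans (by positivity) hω
  obtain ⟨K₀, hK₀, hmean₀⟩ := hmean (h0 k) le_rfl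
  obtain ⟨K, hK, hmoment⟩ :=
    integral_norm_TPtil_pow_two_mul_le (ω := ω) hk hh1 hω0 (one_le_h0 k) hK₀ hmean₀
  set C : ℝ := h * k * log 4
  have hC : 0 < C := mul_pos (by positivity) (log_pos (by norm_num))
  refine ⟨C ^ (ℓ - 2 * h0 k) * K, by positivity, fun x hx => ?_⟩
  have hx0 : (0 : ℝ) < x := by positivity
  calc ∫ α in (0 : ℝ)..1, ‖TPtil k ω h x α‖ ^ ℓ
      ≤ (C * (x : ℝ) ^ ω) ^ (ℓ - 2 * h0 k) * ∫ α in (0 : ℝ)..1, ‖TPtil k ω h x α‖ ^ (2 * h0 k) :=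
        integral_norm_pow_le_pow_mul_integral_norm_pow (continuous_TPtil k ω h x)
          (norm_TPtil_le hk hh1 hω0 (by omega)) hℓ zero_le_one
    _ ≤ (C * (x : ℝ) ^ ω) ^ (ℓ - 2 * h0 k) *
          (K * (x : ℝ) ^ (2 * (h0 k : ℝ) * ω - 1) * log x ^ (ξ + 2 * (h0 k : ℝ))) := by
        gcongr; exact hmoment x hx
    _ = C ^ (ℓ - 2 * h0 k) * K * (x : ℝ) ^ ((ℓ : ℝ) * ω - 1) * log x ^ (ξ + 2 * (h0 k : ℝ)) := by
        have hxpow : ((x : ℝ) ^ ω) ^ (ℓ - 2 * h0 k) * (x : ℝ) ^ (2 * (h0 k : ℝ) * ω - 1) =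
            (x : ℝ) ^ ((ℓ : ℝ) * ω - 1) := by
          rw [← rpow_mul_natCast hx0.le, ← rpow_add hx0, Nat.cast_sub hℓ]
          push_cast
          ring_nf
        rw [mul_pow, ← hxpow]
        ring
end
end
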